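/- arXiv:2112.02370 — 3 statements merged into one kernel-verified Lean document; each statement's English description precedes it below -/
import Mathlib

section
/- If 0 < γ₂ ≤ γ₁ then the forward-backward envelope satisfies φ_{γ₂}(x) ≥ φ_{γ₁}(x) for all x, where φ_γ(x) = ψ(x) − (γ/2)‖∇ψ(x)‖² + h^γ(x − γ∇ψ(x)). -/
lemma coe_add_iInf_fbe {ι : Sort*} [Nonempty ι] (r : ℝ) (f : ι → EReal) :
    (r : EReal) + ⨅ i, f i = ⨅ i, ((r : EReal) + f i) := by
  apply le_antisymm
  · exact le_iInf fun i => add_le_add_right (iInf_le _ i) _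
  · have h1 : (⨅ i, ((r : EReal) + f i)) - r ≤ ⨅ i, f i := by
      refine le_iInf fun i => ?_
      rw [EReal.sub_le_iff_le_add (.inl (EReal.coe_ne_bot r)) (.inl (EReal.coe_ne_top r))]
      exact (iInf_le _ i).trans (by rw [add_comm])
    calc (⨅ i, ((r : EReal) + f i)) = (⨅ i, ((r : EReal) + f i)) - r + r :=
          (EReal.sub_add_cancel).symm
      _ ≤ (⨅ i, f i) + r := add_le_add_left h1 _
      _ = (r : EReal) + ⨅ i, f i := add_comm _ _

lemma key_real_fbe (n : ℕ) (u g : EuclideanSpace ℝ (Fin n)) (γ : ℝ) (hγ : 0 < γ) :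
    -(γ / 2 * ‖g‖ ^ 2) + ‖u + γ • g‖ ^ 2 / (2 * γ)
      = inner ℝ u g + ‖u‖ ^ 2 / (2 * γ) := by
  have : ‖u + γ • g‖ ^ 2 = ‖u‖ ^ 2 + 2 * inner ℝ u ((γ:ℝ) • g) + ‖(γ:ℝ) • g‖ ^ 2 :=
    norm_add_sq_real u (γ • g)
  rw [this, real_inner_smul_right, norm_smul]
  rw [Real.norm_eq_abs, abs_of_pos hγ]
  field_simp
  ring

/-- If `0 < γ₂ ≤ γ₁` then the forward-backward envelope
`φ_γ(x) = ψ(x) − (γ/2)‖∇ψ(x)‖² + h^γ(x − γ∇ψ(x))` satisfies `φ_{γ₂}(x) ≥ φ_{γ₁}(x)`. -/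
theorem fbe_antitone_in_gamma (n : ℕ)
    (ψ : EuclideanSpace ℝ (Fin n) → ℝ) (ψ' : EuclideanSpace ℝ (Fin n) → EuclideanSpace ℝ (Fin n))
    (hψ : ∀ x, HasGradientAt ψ (ψ' x) x)
    (h : EuclideanSpace ℝ (Fin n) → EReal)
    (hproper : (∃ w, h w ≠ ⊤) ∧ ∀ w, h w ≠ ⊥)
    (env : ℝ → EuclideanSpace ℝ (Fin n) → EReal)
    (henv : ∀ γ y, env γ y = ⨅ w : EuclideanSpace ℝ (Fin n),
        h w + ((‖w - y‖ ^ 2 / (2 * γ) : ℝ) : EReal))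
    (φ : ℝ → EuclideanSpace ℝ (Fin n) → EReal)
    (hφ : ∀ γ x, φ γ x = ((ψ x - γ / 2 * ‖ψ' x‖ ^ 2 : ℝ) : EReal) + env γ (x - γ • ψ' x))
    (γ₁ γ₂ : ℝ) (hγ₂ : 0 < γ₂) (hle : γ₂ ≤ γ₁) (x : EuclideanSpace ℝ (Fin n)) :
    φ γ₁ x ≤ φ γ₂ x := by
  have hγ₁ : 0 < γ₁ := hγ₂.trans_le hle
  have key : ∀ γ : ℝ, 0 < γ → ∀ w : EuclideanSpace ℝ (Fin n),
      (ψ x - γ / 2 * ‖ψ' x‖ ^ 2) + ‖w - (x - γ • ψ' x)‖ ^ 2 / (2 * γ)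
        = ψ x + (inner ℝ (w - x) (ψ' x) + ‖w - x‖ ^ 2 / (2 * γ)) := by
    intro γ hγ w
    have hw : w - (x - γ • ψ' x) = (w - x) + γ • ψ' x := by abel
    rw [hw]
    have := key_real_fbe n (w - x) (ψ' x) γ hγ
    linarith
  rw [hφ, hφ, henv, henv, coe_add_iInf_fbe, coe_add_iInf_fbe]
  refine iInf_mono fun w => ?_
  have hre : (ψ x - γ₁ / 2 * ‖ψ' x‖ ^ 2) + ‖w - (x - γ₁ • ψ' x)‖ ^ 2 / (2 * γ₁)
      ≤ (ψ x - γ₂ / 2 * ‖ψ' x‖ ^ 2) + ‖w - (x - γ₂ • ψ' x)‖ ^ 2 / (2 * γ₂) := by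
    rw [key γ₁ hγ₁ w, key γ₂ hγ₂ w]
    have hd : ‖w - x‖ ^ 2 / (2 * γ₁) ≤ ‖w - x‖ ^ 2 / (2 * γ₂) :=
      div_le_div_of_nonneg_left (by positivity) (by linarith) (by linarith)
    linarith
  calc ((ψ x - γ₁ / 2 * ‖ψ' x‖ ^ 2 : ℝ) : EReal)
        + (h w + ((‖w - (x - γ₁ • ψ' x)‖ ^ 2 / (2 * γ₁) : ℝ) : EReal))
      = h w + (((ψ x - γ₁ / 2 * ‖ψ' x‖ ^ 2 : ℝ) : EReal)
          + ((‖w - (x - γ₁ • ψ' x)‖ ^ 2 / (2 * γ₁) : ℝ) : EReal)) := by abel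
    _ = h w + (((ψ x - γ₁ / 2 * ‖ψ' x‖ ^ 2) + ‖w - (x - γ₁ • ψ' x)‖ ^ 2 / (2 * γ₁) : ℝ) : EReal) := by
          rw [EReal.coe_add]
    _ ≤ h w + (((ψ x - γ₂ / 2 * ‖ψ' x‖ ^ 2) + ‖w - (x - γ₂ • ψ' x)‖ ^ 2 / (2 * γ₂) : ℝ) : EReal) :=
          add_le_add_right (EReal.coe_le_coe_iff.2 hre) _
    _ = h w + (((ψ x - γ₂ / 2 * ‖ψ' x‖ ^ 2 : ℝ) : EReal)
          + ((‖w - (x - γ₂ • ψ' x)‖ ^ 2 / (2 * γ₂) : ℝ) : EReal)) := by rw [EReal.coe_add]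
    _ = ((ψ x - γ₂ / 2 * ‖ψ' x‖ ^ 2 : ℝ) : EReal)
        + (h w + ((‖w - (x - γ₂ • ψ' x)‖ ^ 2 / (2 * γ₂) : ℝ) : EReal)) := by abel
end

section
/- Let C be a box in ℝⁿ, γ > 0, and suppose at a point x each component xᵢ − γ∂ψ/∂xᵢ(x) lies in the open interval (l_i, u_i) for i in the inactive set 𝒥 and strictly outside [l_i, u_i] for i in the active set 𝒦. Then in a neighborhood of x the projected-gradient map T_γ(w) = Π_C(w − γ∇ψ(w)) satisfies: (T_γ(w))ᵢ equals the constant bound (lᵢ or uᵢ) for i ∈ 𝒦, and equals wᵢ − γ∂ψ/∂xᵢ(w) for i ∈ 𝒥, provided ∇ψ is continuous at x. -/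
open Filter

/-- Near a point with strictly active/inactive box constraints after a gradient step, the
projected-gradient map `T_γ(w) = Π_C(w − γ∇ψ(w))` has components equal to the constant
bound (`lᵢ` or `uᵢ`) for strictly active indices, and equal to `wᵢ − γ∂ψ/∂xᵢ(w)` for
strictly inactive indices, provided `∇ψ` is continuous at `x`. -/
theorem projected_gradient_local_structure (n : ℕ) (l u : Fin n → ℝ) (hlu : ∀ i, l i ≤ u i)
    (γ : ℝ) (hγ : 0 < γ)
    (ψ : EuclideanSpace ℝ (Fin n) → ℝ) (ψ' : EuclideanSpace ℝ (Fin n) → EuclideanSpace ℝ (Fin n))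
    (hψ : ∀ w, HasGradientAt ψ (ψ' w) w)
    (x : EuclideanSpace ℝ (Fin n)) (hcont : ContinuousAt ψ' x)
    (hstrict : ∀ i, x i - γ * ψ' x i < l i ∨ u i < x i - γ * ψ' x i ∨
        (l i < x i - γ * ψ' x i ∧ x i - γ * ψ' x i < u i)) :
    let T : EuclideanSpace ℝ (Fin n) → EuclideanSpace ℝ (Fin n) := fun w =>
      WithLp.toLp 2 (fun i => max (l i) (min (u i) (w i - γ * ψ' w i)))
    ∀ᶠ w in nhds x, ∀ i,
      (x i - γ * ψ' x i < l i → T w i = l i) ∧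
      (u i < x i - γ * ψ' x i → T w i = u i) ∧
      (l i < x i - γ * ψ' x i ∧ x i - γ * ψ' x i < u i → T w i = w i - γ * ψ' w i) := by
  intro T
  rw [eventually_all]
  intro i
  have hproj : ContinuousAt (fun w : EuclideanSpace ℝ (Fin n) => w i) x :=
    (EuclideanSpace.proj (𝕜 := ℝ) i).continuous.continuousAt
  have hgi : ContinuousAt (fun w => w i - γ * ψ' w i) x := by
    exact hproj.sub (continuousAt_const.mul
      (((EuclideanSpace.proj (𝕜 := ℝ) i).continuous.continuousAt).comp hcont))
  rcases hstrict i with h | h | ⟨h1, h2⟩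
  · filter_upwards [hgi.eventually_lt continuousAt_const h] with w hw
    have hle := hlu i
    refine ⟨fun _ => ?_, fun h' => by linarith, fun h' => by linarith [h'.1]⟩
    have : min (u i) (w i - γ * ψ' w i) = w i - γ * ψ' w i := min_eq_right (by linarith)
    simp only [T, this, max_eq_left hw.le]
  · filter_upwards [continuousAt_const.eventually_lt hgi h] with w hw
    have hle := hlu i
    refine ⟨fun h' => by linarith, fun _ => ?_, fun h' => by linarith [h'.2]⟩
    have : min (u i) (w i - γ * ψ' w i) = u i := min_eq_left hw.le
    simp only [T, this, max_eq_right hle]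
  · filter_upwards [continuousAt_const.eventually_lt hgi h1,
      hgi.eventually_lt continuousAt_const h2] with w hw1 hw2
    refine ⟨fun h' => by linarith, fun h' => by linarith, fun _ => ?_⟩
    have : min (u i) (w i - γ * ψ' w i) = w i - γ * ψ' w i := min_eq_right hw2.le
    simp only [T, this, max_eq_right hw1.le]
end

section
/- Under the assumptions of the previous neighborhood characterization, if additionally ψ is twice differentiable at x, then the fixed-point residual R_γ(w) = (1/γ)(w − T_γ(w)) is differentiable at x, and its Jacobian, after permuting active indices 𝒦 before inactive indices 𝒥, is the block lower-triangular matrix [[γ⁻¹I, 0], [∇²_{x_𝒥x_𝒦}ψ(x), ∇²_{x_𝒥x_𝒥}ψ(x)]]; in particular it is invertible whenever the block ∇²_{x_𝒥x_𝒥}ψ(x) is invertible. -/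
open scoped Classical

/-- Under strict activity, if `ψ` is twice differentiable at `x` (with Hessian matrix `H`
there, i.e. `∇ψ` has derivative `H` at `x`), the fixed-point residual
`R_γ(w) = (1/γ)(w − T_γ(w))` is differentiable at `x` with Jacobian whose row `i` is
`γ⁻¹ eᵢ` for active indices `i ∈ 𝒦` and the Hessian row `∇²_{x_i x}ψ(x)` for inactive
indices `i ∈ 𝒥` (the block lower-triangular matrix after permutation); in particular the
Jacobian is invertible whenever the block `∇²_{x_𝒥 x_𝒥}ψ(x)` is invertible. -/
theorem jacobian_fixed_point_residual (n : ℕ) (l u : Fin n → ℝ) (hlu : ∀ i, l i ≤ u i)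
    (γ : ℝ) (hγ : 0 < γ)
    (ψ : EuclideanSpace ℝ (Fin n) → ℝ) (ψ' : EuclideanSpace ℝ (Fin n) → EuclideanSpace ℝ (Fin n))
    (hψ : ∀ w, HasGradientAt ψ (ψ' w) w)
    (x : EuclideanSpace ℝ (Fin n)) (hcont : ContinuousAt ψ' x)
    (H : Matrix (Fin n) (Fin n) ℝ)
    (hH : HasFDerivAt ψ' (Matrix.toEuclideanCLM (𝕜 := ℝ) H) x)
    (hstrict : ∀ i, x i - γ * ψ' x i < l i ∨ u i < x i - γ * ψ' x i ∨
        (l i < x i - γ * ψ' x i ∧ x i - γ * ψ' x i < u i)) :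
    let K : Set (Fin n) := {i | x i - γ * ψ' x i ≤ l i ∨ u i ≤ x i - γ * ψ' x i}
    let T : EuclideanSpace ℝ (Fin n) → EuclideanSpace ℝ (Fin n) := fun w =>
      WithLp.toLp 2 (fun i => max (l i) (min (u i) (w i - γ * ψ' w i)))
    let R : EuclideanSpace ℝ (Fin n) → EuclideanSpace ℝ (Fin n) := fun w => γ⁻¹ • (w - T w)
    let Jm : Matrix (Fin n) (Fin n) ℝ := fun i j =>
      if i ∈ K then (if j = i then γ⁻¹ else 0) else H i j
    HasFDerivAt R (Matrix.toEuclideanCLM (𝕜 := ℝ) Jm) x ∧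
      (IsUnit (Matrix.of fun i j : {i : Fin n // i ∉ K} => H i.1 j.1).det → IsUnit Jm.det) := by
  intro K T R Jm
  have hγ' : (γ : ℝ)⁻¹ ≠ 0 := inv_ne_zero hγ.ne'
  constructor
  · -- define auxiliary matrices
    set P : Matrix (Fin n) (Fin n) ℝ :=
      fun i j => if i ∈ K then (if j = i then γ⁻¹ else 0) else 0 with hP
    set Q : Matrix (Fin n) (Fin n) ℝ :=
      fun i j => if i ∈ K then 0 else (if j = i then 1 else 0) with hQ
    have hJm : Jm = P + Q * H := by
      ext i j
      by_cases hi : i ∈ K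
      · rw [Matrix.add_apply, Matrix.mul_apply]; simp [Jm, hP, hQ, hi]
      · rw [Matrix.add_apply, Matrix.mul_apply]; simp [Jm, hP, hQ, hi]
    -- the constant shift
    set c : EuclideanSpace ℝ (Fin n) := WithLp.toLp 2 (fun i =>
      if i ∈ K then -(γ⁻¹ * max (l i) (min (u i) (x i - γ * ψ' x i))) else 0) with hc
    set G : EuclideanSpace ℝ (Fin n) → EuclideanSpace ℝ (Fin n) := fun w =>
      Matrix.toEuclideanCLM (𝕜 := ℝ) P w + Matrix.toEuclideanCLM (𝕜 := ℝ) Q (ψ' w) + c with hGdef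
    have hG : HasFDerivAt G (Matrix.toEuclideanCLM (𝕜 := ℝ) Jm) x := by
      have h1 : HasFDerivAt (fun w => Matrix.toEuclideanCLM (𝕜 := ℝ) P w +
          Matrix.toEuclideanCLM (𝕜 := ℝ) Q (ψ' w))
          (Matrix.toEuclideanCLM (𝕜 := ℝ) P +
            (Matrix.toEuclideanCLM (𝕜 := ℝ) Q).comp (Matrix.toEuclideanCLM (𝕜 := ℝ) H)) x :=
        (Matrix.toEuclideanCLM (𝕜 := ℝ) P).hasFDerivAt.add
          ((Matrix.toEuclideanCLM (𝕜 := ℝ) Q).hasFDerivAt.comp x hH)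
      have h2 := h1.add_const c
      have h3 : Matrix.toEuclideanCLM (𝕜 := ℝ) Jm = Matrix.toEuclideanCLM (𝕜 := ℝ) P +
          (Matrix.toEuclideanCLM (𝕜 := ℝ) Q).comp (Matrix.toEuclideanCLM (𝕜 := ℝ) H) := by
        rw [hJm, map_add, map_mul]; rfl
      rw [h3]; exact h2
    refine hG.congr_of_eventuallyEq ?_
    -- eventual equality of R and G
    have happ : ∀ (A : Matrix (Fin n) (Fin n) ℝ) (v : EuclideanSpace ℝ (Fin n)) (i : Fin n),
        (Matrix.toEuclideanCLM (𝕜 := ℝ) A v) i = ∑ j, A i j * v j := fun A v i => rfl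
    have hkey : ∀ i : Fin n, ∀ᶠ w in nhds x, R w i = G w i := by
      intro i
      have hconti : ContinuousAt (fun w : EuclideanSpace ℝ (Fin n) => w i - γ * ψ' w i) x := by
        exact ((EuclideanSpace.proj i).continuous.continuousAt).sub
          (continuousAt_const.mul (((EuclideanSpace.proj i).continuous.continuousAt).comp hcont))
      rcases hstrict i with h1 | h2 | h3
      · -- active low
        have hiK : i ∈ K := Or.inl h1.le
        filter_upwards [hconti.eventually_lt_const h1] with w hw
        have hTw : max (l i) (min (u i) (w i - γ * ψ' w i)) = l i := by
          rw [min_eq_right (hw.le.trans (hlu i)), max_eq_left hw.le]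
        have hTx : max (l i) (min (u i) (x i - γ * ψ' x i)) = l i := by
          rw [min_eq_right (h1.le.trans (hlu i)), max_eq_left h1.le]
        show γ⁻¹ * (w i - T w i) = _
        simp only [hGdef, PiLp.add_apply, happ, hc, PiLp.toLp_apply]; simp only [hiK, if_pos, hP, hQ]
        simp only [if_pos hiK, T, PiLp.toLp_apply, hTw, hTx]
        simp only [ite_mul, zero_mul, Finset.sum_ite_eq', Finset.mem_univ, if_true,
          Finset.sum_const_zero]
        ring
      · -- active high
        have hiK : i ∈ K := Or.inr h2.le
        filter_upwards [hconti.eventually_const_lt h2] with w hw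
        have hTw : max (l i) (min (u i) (w i - γ * ψ' w i)) = u i := by
          rw [min_eq_left hw.le, max_eq_right (hlu i)]
        have hTx : max (l i) (min (u i) (x i - γ * ψ' x i)) = u i := by
          rw [min_eq_left h2.le, max_eq_right (hlu i)]
        show γ⁻¹ * (w i - T w i) = _
        simp only [hGdef, PiLp.add_apply, happ, hc, PiLp.toLp_apply]; simp only [hiK, if_pos, hP, hQ]
        simp only [if_pos hiK, T, PiLp.toLp_apply, hTw, hTx]
        simp only [ite_mul, zero_mul, Finset.sum_ite_eq', Finset.mem_univ, if_true,
          Finset.sum_const_zero]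
        ring
      · -- inactive
        have hiK : i ∉ K := by
          intro h
          rcases h with h | h
          · exact absurd h (not_le.mpr h3.1)
          · exact absurd h (not_le.mpr h3.2)
        filter_upwards [hconti.eventually_const_lt h3.1, hconti.eventually_lt_const h3.2]
          with w hwl hwu
        have hTw : max (l i) (min (u i) (w i - γ * ψ' w i)) = w i - γ * ψ' w i := by
          rw [min_eq_right hwu.le, max_eq_right hwl.le]
        show γ⁻¹ * (w i - T w i) = _
        simp only [hGdef, PiLp.add_apply, happ, hc, PiLp.toLp_apply]; simp only [hP, hQ]
        simp only [if_neg hiK, T, PiLp.toLp_apply, hTw]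
        simp only [ite_mul, zero_mul, one_mul, Finset.sum_ite_eq', Finset.mem_univ, if_true,
          Finset.sum_const_zero]
        field_simp
        ring
    have := (Filter.eventually_all (ι := Fin n)).mpr hkey
    filter_upwards [this] with w hw
    exact PiLp.ext hw
  · -- invertibility
    intro hb
    rw [isUnit_iff_ne_zero]
    intro hdet
    obtain ⟨v, hv0, hv⟩ := Matrix.exists_mulVec_eq_zero_iff.mpr hdet
    have hvK : ∀ i ∈ K, v i = 0 := by
      intro i hi
      have h0 := congrFun hv i
      simp only [Matrix.mulVec, dotProduct, Jm, if_pos hi, Pi.zero_apply] at h0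
      simp only [ite_mul, zero_mul, Finset.sum_ite_eq', Finset.mem_univ, if_true] at h0
      exact (mul_eq_zero.mp h0).resolve_left hγ'
    have hblock : (Matrix.of fun i j : {i : Fin n // i ∉ K} => H i.1 j.1).mulVec
        (fun j => v j.1) = 0 := by
      funext i
      have h0 := congrFun hv i.1
      simp only [Matrix.mulVec, dotProduct, Jm, if_neg i.2, Pi.zero_apply] at h0
      simp only [Matrix.mulVec, dotProduct, Matrix.of_apply, Pi.zero_apply]
      have hsplit : ∑ j : Fin n, H i.1 j * v j =
          ∑ j ∈ Finset.univ.filter (fun j => j ∉ K), H i.1 j * v j := by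
        rw [Finset.sum_filter]
        refine Finset.sum_congr rfl fun j _ => ?_
        by_cases hj : j ∈ K
        · simp [hj, hvK j hj]
        · simp [hj]
      have hsub : ∑ j ∈ Finset.univ.filter (fun j => j ∉ K), H i.1 j * v j =
          ∑ j : {j : Fin n // j ∉ K}, H i.1 j.1 * v j.1 := by
        rw [← Finset.sum_subtype (Finset.univ.filter (fun j => j ∉ K))
          (fun j => by simp) (fun j => H i.1 j * v j)]
      rw [← hsub, ← hsplit, h0]
    have hinj := Matrix.mulVec_injective_iff_isUnit.mpr
      ((Matrix.isUnit_iff_isUnit_det _).mpr hb)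
    have hw0 : (fun j : {i : Fin n // i ∉ K} => v j.1) = 0 := by
      apply hinj
      rw [hblock, Matrix.mulVec_zero]
    apply hv0
    funext i
    by_cases hi : i ∈ K
    · exact hvK i hi
    · exact congrFun hw0 ⟨i, hi⟩
end
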